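/- Let G be a finite bipartite multigraph (no loops) and let k ≥ 1. Then 2·ν_k(G) ≥ ν_{k−1}(G) + ν_{k+1}(G), i.e., ν_k(G) ≥ (ν_{k−1}(G) + ν_{k+1}(G))/2. -/

import Mathlib

/-!
By König's edge-coloring theorem, a bipartite multigraph is `k`-edge-colorable as soon as its
maximum degree is at most `k`, so `ν_k` is the largest size of a subgraph of maximum degree `k`.
Take optimal `F₁` of maximum degree `k - 1` and `F₂` of maximum degree `k + 1`. Put the edges of
`F₁ ∩ F₂` into both of two new subgraphs and split the symmetric difference between them so that
each receives at most `⌈d / 2⌉` of the `d` edges of the symmetric difference at every vertex.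
Both subgraphs then have maximum degree `k`, and their sizes add up to `|F₁| + |F₂|`.

Such a balanced split is itself a `2`-edge-coloring: split every vertex into vertices of degree at
most `2`, each taking two consecutive edges, and apply König's theorem. König's theorem is proved
by adding one edge `uv` at a time: with `a` missing at `u` and `b` missing at `v`, exchanging `a`
and `b` on the Kempe chain of `u` (everything reachable from `u` along edges colored `b, a, b, …`)
frees `b` at `u`, and the chain misses `v` because by parity it could only enter `v` along a
`b`-edge.
-/

variable {V E : Type*}

/-- Degree of vertex `v` in the edge set `A` of a multigraph given by `ends`. -/
def degIn [DecidableEq V] (ends : E → Sym2 V) (A : Finset E) (v : V) : ℕ :=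
  (A.filter (fun e => v ∈ ends e)).card

/-- The edge set `A` admits a proper edge coloring with at most `k` colors:
adjacent (distinct, sharing an endpoint) edges get different colors. -/
def EdgeColorable (ends : E → Sym2 V) (A : Finset E) (k : ℕ) : Prop :=
  ∃ c : E → ℕ, (∀ e ∈ A, c e < k) ∧
    ∀ e₁ ∈ A, ∀ e₂ ∈ A, e₁ ≠ e₂ → (∃ v, v ∈ ends e₁ ∧ v ∈ ends e₂) → c e₁ ≠ c e₂

/-- `ν_k`: the maximum number of edges of a `k`-edge-colorable subgraph whose
edge set lies in `ground`. -/
noncomputable def nu (ends : E → Sym2 V) (ground : Finset E) (k : ℕ) : ℕ :=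
  sSup {n | ∃ F : Finset E, F ⊆ ground ∧ EdgeColorable ends F k ∧ F.card = n}

/-- The multigraph given by `ends` is bipartite. -/
def IsBipartite (ends : E → Sym2 V) : Prop :=
  ∃ f : V → Bool, ∀ e : E, ∀ u v : V, ends e = s(u, v) → f u ≠ f v

/-- There is an `A`-augmenting path: a simple path of odd length whose
odd-numbered (1st, 3rd, ...) edges lie outside `A`, whose even-numbered
(2nd, 4th, ...) edges belong to `A`, and whose endpoints have degree
at most `k - 1` in `A`. -/
def IsAugPath [DecidableEq V] (ends : E → Sym2 V) (A : Finset E) (k : ℕ) : Prop :=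
  ∃ (m : ℕ) (vs : Fin (m + 1) → V) (es : Fin m → E),
    Odd m ∧ Function.Injective vs ∧
    (∀ i : Fin m, ends (es i) = s(vs i.castSucc, vs i.succ)) ∧
    (∀ i : Fin m, (i : ℕ) % 2 = 0 → es i ∉ A) ∧
    (∀ i : Fin m, (i : ℕ) % 2 = 1 → es i ∈ A) ∧
    degIn ends A (vs 0) ≤ k - 1 ∧ degIn ends A (vs (Fin.last m)) ≤ k - 1

open Finset

section Degree

variable [DecidableEq V] {ends : E → Sym2 V}

theorem degIn_mono {A B : Finset E} (h : A ⊆ B) (x : V) :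
    degIn ends A x ≤ degIn ends B x :=
  card_le_card (filter_subset_filter _ h)

theorem degIn_insert [DecidableEq E] {A : Finset E} {e : E} (he : e ∉ A) {x : V}
    (hx : x ∈ ends e) : degIn ends (insert e A) x = degIn ends A x + 1 := by
  rw [degIn, filter_insert, if_pos hx, card_insert_of_notMem (by simp [he])]
  rfl

theorem degIn_union_of_disjoint [DecidableEq E] {A B : Finset E} (h : Disjoint A B) (x : V) :
    degIn ends (A ∪ B) x = degIn ends A x + degIn ends B x := by
  rw [degIn, filter_union, card_union_of_disjoint (disjoint_filter_filter h)]
  rfl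

theorem degIn_union_add_degIn_inter [DecidableEq E] (A B : Finset E) (x : V) :
    degIn ends (A ∪ B) x + degIn ends (A ∩ B) x = degIn ends A x + degIn ends B x := by
  rw [degIn, degIn, filter_union, filter_inter_distrib, card_union_add_card_inter]
  rfl

theorem degIn_sdiff_add [DecidableEq E] {A B : Finset E} (h : B ⊆ A) (x : V) :
    degIn ends (A \ B) x + degIn ends B x = degIn ends A x := by
  rw [← degIn_union_of_disjoint sdiff_disjoint, sdiff_union_of_subset h]

end Degree

def IsProperEdgeColoring (ends : E → Sym2 V) (A : Finset E) (k : ℕ) (c : E → ℕ) : Prop :=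
  (∀ e ∈ A, c e < k) ∧
    ∀ e₁ ∈ A, ∀ e₂ ∈ A, e₁ ≠ e₂ → (∃ v, v ∈ ends e₁ ∧ v ∈ ends e₂) → c e₁ ≠ c e₂

def MissingAt (ends : E → Sym2 V) (A : Finset E) (c : E → ℕ) (x : V) (a : ℕ) : Prop :=
  ∀ g ∈ A, x ∈ ends g → c g ≠ a

section Coloring

variable {ends : E → Sym2 V} {A : Finset E} {k : ℕ} {c : E → ℕ}

theorem EdgeColorable.degIn_le [DecidableEq V] (h : EdgeColorable ends A k) (x : V) :
    degIn ends A x ≤ k := by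
  obtain ⟨c, hlt, hprop⟩ := h
  calc degIn ends A x ≤ #(range k) := by
        refine card_le_card_of_injOn c (fun g hg => mem_range.2 (hlt g (mem_filter.1 hg).1)) ?_
        intro g₁ h₁ g₂ h₂ hc
        by_contra hne
        exact hprop g₁ (mem_filter.1 h₁).1 g₂ (mem_filter.1 h₂).1 hne
          ⟨x, (mem_filter.1 h₁).2, (mem_filter.1 h₂).2⟩ hc
    _ = k := card_range k

theorem exists_missingAt [DecidableEq V] (c : E → ℕ) {x : V} (hx : degIn ends A x < k) :
    ∃ a < k, MissingAt ends A c x a := by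
  have hcard : #({g ∈ A | x ∈ ends g}.image c) < #(range k) := by
    rw [card_range]
    exact card_image_le.trans_lt hx
  obtain ⟨a, ha, hna⟩ := exists_mem_notMem_of_card_lt_card hcard
  exact ⟨a, mem_range.1 ha, fun g hg hxg hga =>
    hna (mem_image.2 ⟨g, mem_filter.2 ⟨hg, hxg⟩, hga⟩)⟩

theorem IsProperEdgeColoring.update_insert [DecidableEq E] (hc : IsProperEdgeColoring ends A k c)
    {e : E} {u v : V} (he : ends e = s(u, v)) {b : ℕ} (hb : b < k)
    (hu : MissingAt ends A c u b) (hv : MissingAt ends A c v b) :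
    IsProperEdgeColoring ends (insert e A) k (Function.update c e b) := by
  have hmiss : ∀ g ∈ A, ∀ x ∈ ends e, x ∈ ends g → c g ≠ b := by
    intro g hg x hx hxg
    rw [he, Sym2.mem_iff] at hx
    rcases hx with rfl | rfl
    exacts [hu g hg hxg, hv g hg hxg]
  refine ⟨fun g hg => ?_, fun g₁ h₁ g₂ h₂ hne ⟨x, hx₁, hx₂⟩ => ?_⟩
  · rcases eq_or_ne g e with rfl | hge
    · simpa using hb
    · rw [Function.update_of_ne hge]
      exact hc.1 g ((mem_insert.1 hg).resolve_left hge)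
  · have hA : ∀ g ∈ insert e A, g ≠ e → g ∈ A := fun g hg hge => (mem_insert.1 hg).resolve_left hge
    rcases eq_or_ne g₁ e with rfl | hg₁
    · rw [Function.update_self, Function.update_of_ne hne.symm]
      exact (hmiss g₂ (hA g₂ h₂ hne.symm) x hx₁ hx₂).symm
    rcases eq_or_ne g₂ e with rfl | hg₂
    · rw [Function.update_self, Function.update_of_ne hne]
      exact hmiss g₁ (hA g₁ h₁ hne) x hx₂ hx₁
    rw [Function.update_of_ne hg₁, Function.update_of_ne hg₂]
    exact hc.2 g₁ (hA g₁ h₁ hg₁) g₂ (hA g₂ h₂ hg₂) hne ⟨x, hx₁, hx₂⟩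

variable {a b : ℕ}

inductive KempeReach (ends : E → Sym2 V) (A : Finset E) (c : E → ℕ) (a b : ℕ) (u : V) :
    V → ℕ → Prop
  | refl : KempeReach ends A c a b u u 0
  | step {x y : V} {n : ℕ} {g : E} : KempeReach ends A c a b u x n → g ∈ A →
      c g = (if Even n then b else a) → ends g = s(x, y) → KempeReach ends A c a b u y (n + 1)

theorem KempeReach.parity {u x : V} {n : ℕ} {f : V → Bool}
    (hf : ∀ e : E, ∀ x y : V, ends e = s(x, y) → f x ≠ f y)
    (h : KempeReach ends A c a b u x n) : f x = f u ↔ Even n := by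
  induction h with
  | refl => simp
  | @step x y n g _ _ _ hg ih =>
    rw [Nat.even_add_one, ← ih]
    have hxy := hf g x y hg
    revert hxy
    cases f x <;> cases f y <;> cases f u <;> decide

theorem KempeReach.exists_of_edge {u x y : V} {n : ℕ} {g : E}
    (hc : IsProperEdgeColoring ends A k c) (hua : MissingAt ends A c u a)
    (h : KempeReach ends A c a b u x n) (hg : g ∈ A) (hgab : c g = a ∨ c g = b)
    (hxy : ends g = s(x, y)) : ∃ m, KempeReach ends A c a b u y m := by
  by_cases hnext : c g = if Even n then b else a
  · exact ⟨n + 1, h.step hg hnext hxy⟩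
  -- otherwise `g` has the color of the last edge `g'` of the walk, so `g = g'` and `y` precedes `x`
  cases h with
  | refl =>
    have hga : c g = a := hgab.resolve_right (by simpa using hnext)
    exact absurd hga (hua g hg (hxy ▸ Sym2.mem_mk_left _ _))
  | @step x' _ n' g' h' hg' hcg' hg'x =>
    have hcol : c g = c g' := by
      rw [hcg']
      by_cases hn' : Even n' <;> simp_all [Nat.even_add_one]
    have hgg' : g = g' := by
      by_contra hne
      exact hc.2 g hg g' hg' hne ⟨x, hxy ▸ Sym2.mem_mk_left _ _, hg'x ▸ Sym2.mem_mk_right _ _⟩ hcol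
    subst hgg'
    obtain rfl : y = x' := by
      rw [hxy, Sym2.eq_swap] at hg'x
      exact Sym2.congr_left.1 hg'x
    exact ⟨n', h'⟩

def kempeSet (ends : E → Sym2 V) (A : Finset E) (c : E → ℕ) (a b : ℕ) (u : V) : Set V :=
  {x | ∃ n, KempeReach ends A c a b u x n}

theorem mem_kempeSet_of_mem {u x y : V} {g : E} (hc : IsProperEdgeColoring ends A k c)
    (hua : MissingAt ends A c u a) (hx : x ∈ kempeSet ends A c a b u) (hg : g ∈ A)
    (hgab : c g = a ∨ c g = b) (hxg : x ∈ ends g) (hyg : y ∈ ends g) :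
    y ∈ kempeSet ends A c a b u := by
  obtain ⟨z, hz⟩ := Sym2.mem_iff_exists.1 hxg
  rw [hz, Sym2.mem_iff] at hyg
  rcases hyg with rfl | rfl
  · exact hx
  · obtain ⟨n, hn⟩ := hx
    exact hn.exists_of_edge hc hua hg hgab hz

theorem notMem_kempeSet {u v : V} {f : V → Bool}
    (hf : ∀ e : E, ∀ x y : V, ends e = s(x, y) → f x ≠ f y) (huv : f u ≠ f v)
    (hvb : MissingAt ends A c v b) : v ∉ kempeSet ends A c a b u := by
  -- `v` lies on the other side from `u`, so a walk reaching it is odd and ends with a `b`-edge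
  rintro ⟨n, h⟩
  have hodd : ¬ Even n := fun hn => huv ((h.parity hf).2 hn).symm
  cases h with
  | refl => exact hodd (by decide)
  | @step x' _ n' g' _ hg' hcg' hg'v =>
    have hn' : Even n' := by simpa [Nat.even_add_one] using hodd
    rw [if_pos hn'] at hcg'
    exact hvb g' hg' (hg'v ▸ Sym2.mem_mk_right _ _) hcg'

open Classical in
noncomputable def swapColorsOn (ends : E → Sym2 V) (c : E → ℕ) (a b : ℕ) (S : Set V) :
    E → ℕ := fun g =>
  if ∃ x ∈ ends g, x ∈ S then Equiv.swap a b (c g) else c g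

theorem swapColorsOn_of_mem {S : Set V} {g : E} {x : V} (hxg : x ∈ ends g) (hx : x ∈ S) :
    swapColorsOn ends c a b S g = Equiv.swap a b (c g) :=
  if_pos ⟨x, hxg, hx⟩

theorem swapColorsOn_of_not_exists {S : Set V} {g : E} (h : ¬∃ x ∈ ends g, x ∈ S) :
    swapColorsOn ends c a b S g = c g :=
  if_neg h

theorem IsProperEdgeColoring.swapColorsOn (hc : IsProperEdgeColoring ends A k c) (ha : a < k)
    (hb : b < k) {S : Set V}
    (hS : ∀ g ∈ A, c g = a ∨ c g = b → ∀ x ∈ ends g, x ∈ S → ∀ y ∈ ends g, y ∈ S) :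
    IsProperEdgeColoring ends A k (swapColorsOn ends c a b S) := by
  have hswap_lt : ∀ g ∈ A, Equiv.swap a b (c g) < k := by
    intro g hg
    rw [Equiv.swap_apply_def]
    split_ifs
    exacts [hb, ha, hc.1 g hg]
  -- an edge swapped next to an unswapped one keeps its color, as it is not colored `a` or `b`
  have hmixed : ∀ g₁ ∈ A, ∀ g₂ ∈ A, ∀ x ∈ ends g₁, x ∈ ends g₂ → (∃ y ∈ ends g₁, y ∈ S) →
      (¬∃ y ∈ ends g₂, y ∈ S) → g₁ ≠ g₂ → Equiv.swap a b (c g₁) ≠ c g₂ := by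
    rintro g₁ h₁ g₂ h₂ x hx₁ hx₂ ⟨y, hy₁, hyS⟩ hout hne
    have hab : c g₁ ≠ a ∧ c g₁ ≠ b := by
      constructor <;> intro hcol <;>
        exact hout ⟨x, hx₂, hS g₁ h₁ (by tauto) y hy₁ hyS x hx₁⟩
    rw [Equiv.swap_apply_of_ne_of_ne hab.1 hab.2]
    exact hc.2 g₁ h₁ g₂ h₂ hne ⟨x, hx₁, hx₂⟩
  refine ⟨fun g hg => ?_, fun g₁ h₁ g₂ h₂ hne ⟨x, hx₁, hx₂⟩ => ?_⟩
  · by_cases hgS : ∃ x ∈ ends g, x ∈ S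
    · obtain ⟨x, hxg, hx⟩ := hgS
      rw [swapColorsOn_of_mem hxg hx]
      exact hswap_lt g hg
    · rw [swapColorsOn_of_not_exists hgS]
      exact hc.1 g hg
  by_cases hS₁ : ∃ y ∈ ends g₁, y ∈ S <;> by_cases hS₂ : ∃ y ∈ ends g₂, y ∈ S
  · obtain ⟨y₁, hy₁, hyS₁⟩ := hS₁
    obtain ⟨y₂, hy₂, hyS₂⟩ := hS₂
    rw [swapColorsOn_of_mem hy₁ hyS₁, swapColorsOn_of_mem hy₂ hyS₂]
    exact (Equiv.swap a b).injective.ne (hc.2 g₁ h₁ g₂ h₂ hne ⟨x, hx₁, hx₂⟩)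
  · obtain ⟨y₁, hy₁, hyS₁⟩ := hS₁
    rw [swapColorsOn_of_mem hy₁ hyS₁, swapColorsOn_of_not_exists hS₂]
    exact hmixed g₁ h₁ g₂ h₂ x hx₁ hx₂ ⟨y₁, hy₁, hyS₁⟩ hS₂ hne
  · obtain ⟨y₂, hy₂, hyS₂⟩ := hS₂
    rw [swapColorsOn_of_mem hy₂ hyS₂, swapColorsOn_of_not_exists hS₁]
    exact (hmixed g₂ h₂ g₁ h₁ x hx₂ hx₁ ⟨y₂, hy₂, hyS₂⟩ hS₁ hne.symm).symm
  · rw [swapColorsOn_of_not_exists hS₁, swapColorsOn_of_not_exists hS₂]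
    exact hc.2 g₁ h₁ g₂ h₂ hne ⟨x, hx₁, hx₂⟩

theorem exists_kempe_recoloring (hbip : IsBipartite ends) (hc : IsProperEdgeColoring ends A k c)
    {e₀ : E} {u v : V} (he₀ : ends e₀ = s(u, v)) (ha : a < k) (hb : b < k)
    (hua : MissingAt ends A c u a) (hvb : MissingAt ends A c v b) :
    ∃ c', IsProperEdgeColoring ends A k c' ∧ MissingAt ends A c' u b ∧ MissingAt ends A c' v b := by
  obtain ⟨f, hf⟩ := hbip
  set S := kempeSet ends A c a b u
  have huS : u ∈ S := ⟨0, .refl⟩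
  have hvS : v ∉ S := notMem_kempeSet hf (hf e₀ u v he₀) hvb
  have hclosed : ∀ g ∈ A, c g = a ∨ c g = b → ∀ x ∈ ends g, x ∈ S → ∀ y ∈ ends g, y ∈ S :=
    fun g hg hgab x hxg hx y hyg => mem_kempeSet_of_mem hc hua hx hg hgab hxg hyg
  refine ⟨swapColorsOn ends c a b S, hc.swapColorsOn ha hb hclosed, fun g hg hug => ?_,
    fun g hg hvg => ?_⟩
  · rw [swapColorsOn_of_mem hug huS, Ne, Equiv.swap_apply_eq_iff, Equiv.swap_apply_right]
    exact hua g hg hug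
  · by_cases hgS : ∃ x ∈ ends g, x ∈ S
    · obtain ⟨x, hxg, hx⟩ := hgS
      rw [swapColorsOn_of_mem hxg hx, Ne, Equiv.swap_apply_eq_iff, Equiv.swap_apply_right]
      exact fun hga => hvS (hclosed g hg (.inl hga) x hxg hx v hvg)
    · rw [swapColorsOn_of_not_exists hgS]
      exact hvb g hg hvg

end Coloring

theorem edgeColorable_of_degIn_le [DecidableEq V] {ends : E → Sym2 V} (hbip : IsBipartite ends)
    {k : ℕ} {A : Finset E} (hA : ∀ x, degIn ends A x ≤ k) : EdgeColorable ends A k := by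
  classical
  induction A using Finset.induction_on with
  | empty => exact ⟨0, by simp, by simp⟩
  | insert e₀ A he₀ ih =>
    obtain ⟨c, hc⟩ := ih fun x => (degIn_mono (subset_insert e₀ A) x).trans (hA x)
    obtain ⟨u, v, huv⟩ : ∃ u v, ends e₀ = s(u, v) := Sym2.ind (fun u v => ⟨u, v, rfl⟩) (ends e₀)
    have hroom : ∀ x ∈ ends e₀, degIn ends A x < k := fun x hx => by
      have := degIn_insert he₀ hx
      have := hA x
      omega
    obtain ⟨a, ha, hua⟩ := exists_missingAt c (hroom u (by simp [huv]))
    obtain ⟨b, hb, hvb⟩ := exists_missingAt c (hroom v (by simp [huv]))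
    obtain ⟨c', hc', hub, hvb'⟩ := exists_kempe_recoloring hbip hc huv ha hb hua hvb
    exact ⟨_, hc'.update_insert huv hb hub hvb'⟩

section Split

variable [DecidableEq V] [LinearOrder E] (ends : E → Sym2 V) (M : Finset E)

def edgeRank (x : V) (e : E) : ℕ := #{e' ∈ M | x ∈ ends e' ∧ e' < e}

variable {ends M}

theorem edgeRank_lt_edgeRank {x : V} {e₁ e₂ : E} (h₁ : e₁ ∈ M) (hx₁ : x ∈ ends e₁)
    (h : e₁ < e₂) : edgeRank ends M x e₁ < edgeRank ends M x e₂ := by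
  refine card_lt_card ⟨fun e he => ?_, fun hsub => ?_⟩
  · simp only [mem_filter] at he ⊢
    exact ⟨he.1, he.2.1, he.2.2.trans h⟩
  · simpa using (mem_filter.1 (hsub (mem_filter.2 ⟨h₁, hx₁, h⟩))).2.2

theorem edgeRank_injOn (x : V) :
    Set.InjOn (edgeRank ends M x) {e | e ∈ M ∧ x ∈ ends e} := by
  intro e₁ ⟨h₁, hx₁⟩ e₂ ⟨h₂, hx₂⟩ heq
  rcases lt_trichotomy e₁ e₂ with h | h | h
  · exact absurd heq (edgeRank_lt_edgeRank h₁ hx₁ h).ne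
  · exact h
  · exact absurd heq (edgeRank_lt_edgeRank h₂ hx₂ h).ne'

theorem edgeRank_lt_degIn {x : V} {e : E} (he : e ∈ M) (hx : x ∈ ends e) :
    edgeRank ends M x e < degIn ends M x := by
  refine card_lt_card ⟨fun e' he' => ?_, fun hsub => ?_⟩
  · simp only [mem_filter] at he' ⊢
    exact ⟨he'.1, he'.2.1⟩
  · simpa using (mem_filter.1 (hsub (mem_filter.2 ⟨he, hx⟩))).2.2

variable (ends M)

/-- The multigraph in which each vertex `x` is split into the vertices `(x, j)`, the edges of `M`
at `x` being distributed to them two at a time in increasing order. -/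
def splitEnds (e : E) : Sym2 (V × ℕ) :=
  (ends e).map fun x => (x, edgeRank ends M x e / 2)

variable {ends M}

theorem mem_splitEnds {x : V} {j : ℕ} {e : E} :
    (x, j) ∈ splitEnds ends M e ↔ x ∈ ends e ∧ edgeRank ends M x e / 2 = j := by
  simp [splitEnds, Sym2.mem_map]

theorem IsBipartite.splitEnds (hbip : IsBipartite ends) : IsBipartite (splitEnds ends M) := by
  obtain ⟨f, hf⟩ := hbip
  refine ⟨f ∘ Prod.fst, fun e p q hpq => hf e p.1 q.1 ?_⟩
  have := congrArg (Sym2.map Prod.fst) hpq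
  simpa [_root_.splitEnds, Sym2.map_map, Function.comp_def] using this

theorem degIn_splitEnds_le_two (x : V) (j : ℕ) : degIn (splitEnds ends M) M (x, j) ≤ 2 := by
  calc degIn (splitEnds ends M) M (x, j) ≤ #{2 * j, 2 * j + 1} := by
        refine card_le_card_of_injOn (edgeRank ends M x) (fun e he => ?_) (fun e₁ h₁ e₂ h₂ => ?_)
        · have := (mem_splitEnds.1 (mem_filter.1 he).2).2
          simp only [coe_insert, coe_singleton, Set.mem_insert_iff, Set.mem_singleton_iff]
          omega
        · simp only [mem_coe, mem_filter, mem_splitEnds] at h₁ h₂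
          exact edgeRank_injOn x ⟨h₁.1, h₁.2.1⟩ ⟨h₂.1, h₂.2.1⟩
    _ ≤ 2 := card_le_two

theorem two_mul_degIn_le_of_monochromatic {c : E → ℕ} {k : ℕ}
    (hc : IsProperEdgeColoring (splitEnds ends M) M k c) {N : Finset E} (hN : N ⊆ M) {i : ℕ}
    (hNi : ∀ e ∈ N, c e = i) (x : V) : 2 * degIn ends N x ≤ degIn ends M x + 1 := by
  have : degIn ends N x ≤ #(range ((degIn ends M x + 1) / 2)) := by
    refine card_le_card_of_injOn (fun e => edgeRank ends M x e / 2) (fun e he => ?_)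
      (fun e₁ h₁ e₂ h₂ heq => ?_)
    · have := edgeRank_lt_degIn (hN (mem_filter.1 he).1) (mem_filter.1 he).2
      simp only [coe_range, Set.mem_Iio]
      omega
    · simp only [mem_coe, mem_filter] at h₁ h₂
      by_contra hne
      refine hc.2 e₁ (hN h₁.1) e₂ (hN h₂.1) hne ⟨(x, edgeRank ends M x e₁ / 2), ?_, ?_⟩
        ((hNi e₁ h₁.1).trans (hNi e₂ h₂.1).symm)
      · exact mem_splitEnds.2 ⟨h₁.2, rfl⟩
      · exact mem_splitEnds.2 ⟨h₂.2, heq.symm⟩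
  rw [card_range] at this
  omega

end Split

theorem exists_balanced_split [DecidableEq V] [DecidableEq E] {ends : E → Sym2 V}
    (hbip : IsBipartite ends) (M : Finset E) :
    ∃ M₁ ⊆ M, ∀ x, 2 * degIn ends M₁ x ≤ degIn ends M x + 1 ∧
      2 * degIn ends (M \ M₁) x ≤ degIn ends M x + 1 := by
  let _ : LinearOrder E := IsWellOrder.linearOrder WellOrderingRel
  obtain ⟨c, hc⟩ := edgeColorable_of_degIn_le hbip.splitEnds (k := 2) (A := M)
    fun p => degIn_splitEnds_le_two p.1 p.2
  refine ⟨{e ∈ M | c e = 0}, filter_subset _ _, fun x =>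
    ⟨two_mul_degIn_le_of_monochromatic hc (filter_subset _ _)
      (fun e he => (mem_filter.1 he).2) x,
    two_mul_degIn_le_of_monochromatic hc sdiff_subset (i := 1) (fun e he => ?_) x⟩⟩
  obtain ⟨heM, he0⟩ := mem_sdiff.1 he
  have := hc.1 e heM
  simp only [mem_filter, heM, true_and] at he0
  omega

theorem exists_pair_degIn_le_of_degIn_add_le [DecidableEq V] [DecidableEq E] {ends : E → Sym2 V}
    (hbip : IsBipartite ends) (F₁ F₂ : Finset E) {k : ℕ}
    (h : ∀ x, degIn ends F₁ x + degIn ends F₂ x ≤ 2 * k) :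
    ∃ N₁ N₂ : Finset E, (∀ x, degIn ends N₁ x ≤ k) ∧ (∀ x, degIn ends N₂ x ≤ k) ∧
      #N₁ + #N₂ = #F₁ + #F₂ := by
  set B := F₁ ∩ F₂
  set M := (F₁ ∪ F₂) \ B
  have hBM : Disjoint B M := disjoint_sdiff
  have hB : B ⊆ F₁ ∪ F₂ := inter_subset_union
  obtain ⟨M₁, hM₁, hsplit⟩ := exists_balanced_split hbip M
  have hdeg : ∀ N ⊆ M, (∀ x, 2 * degIn ends N x ≤ degIn ends M x + 1) →
      ∀ x, degIn ends (B ∪ N) x ≤ k := by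
    intro N hN hNx x
    have hBN : degIn ends (B ∪ N) x = degIn ends B x + degIn ends N x :=
      degIn_union_of_disjoint (hBM.mono_right hN) x
    have hMB : degIn ends M x + degIn ends B x = degIn ends (F₁ ∪ F₂) x := degIn_sdiff_add hB x
    have hF : degIn ends (F₁ ∪ F₂) x + degIn ends B x = degIn ends F₁ x + degIn ends F₂ x :=
      degIn_union_add_degIn_inter F₁ F₂ x
    have := hNx x
    have := h x
    omega
  refine ⟨B ∪ M₁, B ∪ (M \ M₁), hdeg M₁ hM₁ fun x => (hsplit x).1,
    hdeg _ sdiff_subset fun x => (hsplit x).2, ?_⟩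
  rw [card_union_of_disjoint (hBM.mono_right hM₁),
    card_union_of_disjoint (hBM.mono_right sdiff_subset)]
  have hM : #(M \ M₁) + #M₁ = #M := card_sdiff_add_card_eq_card hM₁
  have hMB : #M + #B = #(F₁ ∪ F₂) := card_sdiff_add_card_eq_card hB
  have hF : #(F₁ ∪ F₂) + #B = #F₁ + #F₂ := card_union_add_card_inter F₁ F₂
  omega

section Nu

variable (ends : E → Sym2 V) (ground : Finset E) (k : ℕ)

theorem bddAbove_card_edgeColorable :
    BddAbove {n | ∃ F : Finset E, F ⊆ ground ∧ EdgeColorable ends F k ∧ #F = n} :=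
  bddAbove_def.2 ⟨#ground, by rintro _ ⟨F, hF, -, rfl⟩; exact card_le_card hF⟩

theorem exists_edgeColorable_card_eq_nu :
    ∃ F ⊆ ground, EdgeColorable ends F k ∧ #F = nu ends ground k :=
  Nat.sSup_mem (s := {n | ∃ F : Finset E, F ⊆ ground ∧ EdgeColorable ends F k ∧ #F = n})
    ⟨0, ∅, empty_subset _, ⟨0, by simp, by simp⟩, rfl⟩
    (bddAbove_card_edgeColorable ends ground k)

variable {ends ground k}

theorem card_le_nu {F : Finset E} (hF : F ⊆ ground) (h : EdgeColorable ends F k) :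
    #F ≤ nu ends ground k :=
  le_csSup (bddAbove_card_edgeColorable ends ground k) ⟨F, hF, h, rfl⟩

end Nu

theorem stmt_8_general [Fintype E] (ends : E → Sym2 V)
    (hbip : IsBipartite ends)
    (k : ℕ) (hk : 1 ≤ k) :
    2 * nu ends (Finset.univ : Finset E) k ≥
      nu ends (Finset.univ : Finset E) (k - 1) +
        nu ends (Finset.univ : Finset E) (k + 1) := by
  classical
  obtain ⟨F₁, -, hF₁, hcard₁⟩ := exists_edgeColorable_card_eq_nu ends univ (k - 1)
  obtain ⟨F₂, -, hF₂, hcard₂⟩ := exists_edgeColorable_card_eq_nu ends univ (k + 1)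
  have hdeg : ∀ x, degIn ends F₁ x + degIn ends F₂ x ≤ 2 * k := fun x => by
    have := hF₁.degIn_le x
    have := hF₂.degIn_le x
    omega
  obtain ⟨N₁, N₂, hN₁, hN₂, hcard⟩ := exists_pair_degIn_le_of_degIn_add_le hbip F₁ F₂ hdeg
  have := card_le_nu (subset_univ N₁) (edgeColorable_of_degIn_le hbip hN₁)
  have := card_le_nu (subset_univ N₂) (edgeColorable_of_degIn_le hbip hN₂)
  omega

/-- For a finite bipartite loopless multigraph `G` and `k ≥ 1`:
`2 ν_k(G) ≥ ν_{k-1}(G) + ν_{k+1}(G)`. -/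
theorem stmt_8 [Fintype V] [Fintype E] [DecidableEq V] (ends : E → Sym2 V)
    (hloop : ∀ e : E, ¬ (ends e).IsDiag) (hbip : IsBipartite ends)
    (k : ℕ) (hk : 1 ≤ k) :
    2 * nu ends (Finset.univ : Finset E) k ≥
      nu ends (Finset.univ : Finset E) (k - 1) +
        nu ends (Finset.univ : Finset E) (k + 1) :=
  stmt_8_general ends hbip k hk
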